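/- For every integer m ≥ 2, a word w of length f_m satisfies that ww is a factor of the Fibonacci word F if and only if either (i) w = K_{m−1}[i, f_{m−1}] · K_{m−2} · K_{m−1}[1, i−1] for some integer i with 2 ≤ i ≤ f_{m−1}, or (ii) w = K_m[i, f_m] · K_{m−1} · K_m[1, i − f_{m−1} − 1] for some integer i with f_{m−1}+1 ≤ i ≤ f_m+1. In particular, there are exactly f_m distinct squares of length 2f_m occurring in F. -/

import Mathlib

/-!
The squares of length `2 f_m` are exactly the words `w w` with `w` a rotation of `F_m`.
Since `F_{k+1} F_k` and `F_k F_{k+1}` differ only in their last two letters, `F` agrees with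
`F_m^ω` on `[0, f_{m+1} - 2)` and with `F_m^ω` shifted by `f_{m+1}` on
`[f_{m+1}, f_{m+1} + f_{m+2} + f_m - 2)`, while the first run breaks off at the two positions
`f_{m+1} - 2, f_{m+1} - 1`. Every factor of length at most `f_{m+2} - 2` already occurs before
position `f_{m+2}`, so a square of period `f_m` may be assumed to start there, and the break
forces it into one of the two runs: `w` is a rotation of `F_m`. Conversely every rotation,
squared, occurs in the second run. The `f_m` rotations are pairwise distinct because `F_m`
contains `f_{m-2}` letters `b`, a number coprime to `f_m`. Finally the two kernel-word families
list these rotations by the shift `i - 2`: `K_{m-1} K_{m-2}` is `F_m` with its last letter moved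
to the front, and `K_m = K_{m-2} K_{m-3} K_{m-2}`.
-/

/-- Fibonacci numbers: `fn 0 = 1`, `fn 1 = 2`, `fn (m+2) = fn (m+1) + fn m`
(so `fn m` is the paper's `f_m`; also `f_{m-1} = Nat.fib (m+1)` etc.). -/
def fn (m : ℕ) : ℕ := Nat.fib (m + 2)

/-- Finite Fibonacci words `Fw m = σ^m(a)` for the morphism σ(a)=ab, σ(b)=a,
with `a := false`, `b := true`; equivalently `Fw (m+2) = Fw (m+1) ++ Fw m`. -/
def Fw : ℕ → List Bool
  | 0 => [false]
  | 1 => [false, true]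
  | m + 2 => Fw (m + 1) ++ Fw m

/-- The infinite Fibonacci word (0-indexed): the fixed point of σ beginning with `a`. -/
def fibWord (i : ℕ) : Bool := (Fw (i + 1)).getD i false

/-- `fFactor i n = F[i;n]`, the factor of length `n` of the Fibonacci word
beginning at (1-indexed) position `i`. -/
def fFactor (i n : ℕ) : List Bool := (List.range n).map fun t => fibWord (i - 1 + t)

/-- `w` occurs as a factor of the infinite Fibonacci word. -/
def IsFactorF (w : List Bool) : Prop := ∃ i : ℕ, 1 ≤ i ∧ w = fFactor i w.length

/-- `D2 i n`: the number of distinct squares occurring as factors of `F[i;n]`. -/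
noncomputable def D2 (i n : ℕ) : ℕ :=
  {w : List Bool | w ≠ [] ∧ (w ++ w) <:+: fFactor i n}.ncard

/-- The kernel word `K_m` (`m ≥ 0`): the last letter of `F_{m+1}` followed by
`F_m` with its last letter removed. -/
def kerW (m : ℕ) : List Bool := (Fw (m + 1)).getLast! :: (Fw m).dropLast

/-- `sliceF u i j = u[i,j]`, the (1-indexed) factor of `u` from position `i` to `j`,
with `u[i,i-1] = ε`. -/
def sliceF (u : List Bool) (i j : ℕ) : List Bool := (u.drop (i - 1)).take (j + 1 - i)

theorem fn_add_two (m : ℕ) : fn (m + 2) = fn (m + 1) + fn m :=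
  (Nat.fib_add_two (n := m + 2)).trans (Nat.add_comm _ _)

theorem fn_pos (m : ℕ) : 0 < fn m := Nat.fib_pos.2 (by omega)

theorem fn_strictMono : StrictMono fn := Nat.fib_add_two_strictMono

theorem fn_mono : Monotone fn := fn_strictMono.monotone

theorem le_fn : ∀ m, m + 1 ≤ fn m
  | 0 => le_rfl
  | m + 1 => (le_fn m).trans_lt (fn_strictMono m.lt_succ_self)

theorem Fw_add_two (m : ℕ) : Fw (m + 2) = Fw (m + 1) ++ Fw m := rfl

theorem length_Fw : ∀ m, (Fw m).length = fn m
  | 0 => rfl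
  | 1 => rfl
  | m + 2 => by rw [Fw_add_two, List.length_append, length_Fw (m + 1), length_Fw m, fn_add_two]

theorem Fw_ne_nil (m : ℕ) : Fw m ≠ [] :=
  List.ne_nil_of_length_pos (by rw [length_Fw]; exact fn_pos m)

theorem Fw_prefix_Fw_succ : ∀ m, Fw m <+: Fw (m + 1)
  | 0 => ⟨[true], rfl⟩
  | m + 1 => ⟨Fw m, rfl⟩

theorem Fw_prefix_Fw {m n : ℕ} (h : m ≤ n) : Fw m <+: Fw n := by
  induction n, h using Nat.le_induction with
  | base => exact List.prefix_refl _
  | succ n _ ih => exact ih.trans (Fw_prefix_Fw_succ n)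

theorem List.IsPrefix.getD_eq {α : Type*} {u v : List α} (h : u <+: v) {i : ℕ}
    (hi : i < u.length) (d : α) : u.getD i d = v.getD i d := by
  rw [List.getD_eq_getElem _ _ hi, List.getD_eq_getElem _ _ (hi.trans_le h.length_le)]
  exact h.getElem hi

theorem fibWord_eq_getD {N i : ℕ} (hi : i < fn N) : fibWord i = (Fw N).getD i false := by
  rcases Nat.le_total N (i + 1) with h | h
  · exact ((Fw_prefix_Fw h).getD_eq (by rwa [length_Fw]) false).symm
  · exact (Fw_prefix_Fw h).getD_eq (by have := le_fn (i + 1); rw [length_Fw]; omega) false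

theorem fibWord_length_add {A B : List Bool} {N r : ℕ} (h : A ++ B <+: Fw N)
    (hr : r < B.length) : fibWord (A.length + r) = B.getD r false := by
  have hlt : A.length + r < (A ++ B).length := by rw [List.length_append]; omega
  rw [fibWord_eq_getD (N := N) (by rw [← length_Fw]; exact hlt.trans_le h.length_le),
    ← h.getD_eq hlt, List.getD_append_right _ _ _ _ (by omega), Nat.add_sub_cancel_left]

/-- The common prefix of `Fw (k + 1) ++ Fw k` and `Fw k ++ Fw (k + 1)`. -/
def centralW : ℕ → List Bool
  | 0 => [false]
  | k + 1 => Fw (k + 1) ++ centralW k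

/-- The penultimate letter of `Fw (k + 2)`. -/
def penult (k : ℕ) : Bool := decide (k % 2 = 0)

theorem penult_succ (k : ℕ) : penult (k + 1) = !penult k := by
  rcases Nat.mod_two_eq_zero_or_one k with h | h <;> simp [penult, Nat.add_mod, h]

theorem length_centralW : ∀ k, (centralW k).length + 2 = fn (k + 2)
  | 0 => rfl
  | k + 1 => by
      rw [centralW, List.length_append, length_Fw, Nat.add_assoc, length_centralW k,
        Nat.add_comm, ← fn_add_two]

theorem Fw_append_Fw_swap : ∀ k,
    Fw (k + 1) ++ Fw k = centralW k ++ [penult k, !penult k] ∧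
      Fw k ++ Fw (k + 1) = centralW k ++ [!penult k, penult k]
  | 0 => by decide
  | k + 1 => by
      obtain ⟨h₁, h₂⟩ := Fw_append_Fw_swap k
      constructor
      · change (Fw (k + 1) ++ Fw k) ++ Fw (k + 1) = _
        simp [h₂, centralW, penult_succ]
      · change Fw (k + 1) ++ (Fw (k + 1) ++ Fw k) = _
        simp [h₁, centralW, penult_succ]

theorem eq_mod_of_periodicOn {α : Type*} {f : ℕ → α} {a b p : ℕ} (hp : 0 < p)
    (h : ∀ j, a ≤ j → j + p < b → f (j + p) = f j) :
    ∀ s, a ≤ s → s < b → f s = f (a + (s - a) % p) := by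
  intro s
  induction s using Nat.strong_induction_on with
  | _ s ih =>
    intro has hsb
    rcases lt_or_ge (s - a) p with hlt | hge
    · rw [Nat.mod_eq_of_lt hlt, Nat.add_sub_cancel' has]
    · have hstep := h (s - p) (by omega) (by omega)
      rw [Nat.sub_add_cancel (by omega)] at hstep
      rw [hstep, ih (s - p) (by omega) (by omega) (by omega), Nat.mod_eq_sub_mod hge,
        Nat.sub_right_comm]

theorem fibWord_add_fn_succ (k j : ℕ) (hj : j + 2 < fn (k + 2)) :
    fibWord (j + fn (k + 1)) = fibWord j := by
  obtain ⟨h₁, h₂⟩ := Fw_append_Fw_swap k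
  have hr : j < (centralW k).length := by have := length_centralW k; omega
  have hpre₁ : [] ++ centralW k <+: Fw (k + 2) := ⟨_, h₁.symm⟩
  have hpre₂ : Fw (k + 1) ++ centralW k <+: Fw (k + 3) :=
    ⟨[!penult k, penult k], by
      rw [List.append_assoc, ← h₂, ← List.append_assoc]; rfl⟩
  calc fibWord (j + fn (k + 1)) = fibWord ((Fw (k + 1)).length + j) := by
        rw [length_Fw, Nat.add_comm]
    _ = fibWord (([] : List Bool).length + j) := by
        rw [fibWord_length_add hpre₂ hr, fibWord_length_add hpre₁ hr]
    _ = fibWord j := by rw [List.length_nil, Nat.zero_add]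

theorem fibWord_add_fn_succ_of_le (k j : ℕ) (hj₁ : fn (k + 2) ≤ j)
    (hj₂ : j + 2 < fn (k + 2) + fn (k + 3)) : fibWord (j + fn (k + 1)) = fibWord j := by
  obtain ⟨h₁, h₂⟩ := Fw_append_Fw_swap (k + 1)
  have f₃ : fn (k + 3) = fn (k + 2) + fn (k + 1) := fn_add_two (k + 1)
  have hr : j - fn (k + 2) < (centralW (k + 1)).length := by
    have : (centralW (k + 1)).length + 2 = fn (k + 3) := length_centralW (k + 1)
    omega
  have hpre₁ : Fw (k + 2) ++ centralW (k + 1) <+: Fw (k + 4) :=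
    ⟨[!penult (k + 1), penult (k + 1)], by
      rw [List.append_assoc, ← h₂, ← List.append_assoc]; rfl⟩
  have hpre₂ : Fw (k + 3) ++ centralW (k + 1) <+: Fw (k + 5) := by
    have hc₁ : centralW (k + 1) <+: Fw (k + 2) ++ Fw (k + 1) := ⟨_, h₁.symm⟩
    have hc : centralW (k + 1) <+: Fw (k + 2) ++ Fw (k + 3) :=
      hc₁.trans ((List.prefix_append_right_inj _).2 (Fw_prefix_Fw (by omega)))
    exact ((List.prefix_append_right_inj _).2 hc).trans
      ⟨[], by rw [List.append_nil, ← List.append_assoc]; rfl⟩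
  calc fibWord (j + fn (k + 1)) = fibWord ((Fw (k + 3)).length + (j - fn (k + 2))) := by
        rw [length_Fw]; congr 1; omega
    _ = fibWord ((Fw (k + 2)).length + (j - fn (k + 2))) := by
        rw [fibWord_length_add hpre₂ hr, fibWord_length_add hpre₁ hr]
    _ = fibWord j := by rw [length_Fw]; congr 1; omega

theorem fibWord_fn_succ_add (m s : ℕ) (hs : s < fn m) :
    fibWord (fn (m + 1) + s) = (Fw m).getD s false := by
  rw [← length_Fw (m + 1)]
  exact fibWord_length_add (N := m + 2) (List.prefix_refl _) (by rwa [length_Fw])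

theorem fibWord_eq_getD_mod (k s : ℕ) (hs : s + 2 < fn (k + 2)) :
    fibWord s = (Fw (k + 1)).getD (s % fn (k + 1)) false := by
  rw [eq_mod_of_periodicOn (b := fn (k + 2) - 2) (fn_pos (k + 1))
      (fun j _ hj => fibWord_add_fn_succ k j (by omega)) s (Nat.zero_le s) (by omega),
    Nat.zero_add, Nat.sub_zero]
  exact fibWord_eq_getD (Nat.mod_lt _ (fn_pos _))

theorem fibWord_fn_succ_add_eq_getD_mod (k s : ℕ) (hs : s + 2 < fn (k + 3) + fn (k + 1)) :
    fibWord (fn (k + 2) + s) = (Fw (k + 1)).getD (s % fn (k + 1)) false := by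
  rw [eq_mod_of_periodicOn (b := fn (k + 2) + fn (k + 3) + fn (k + 1) - 2) (fn_pos (k + 1))
      (fun j hj₁ hj₂ => fibWord_add_fn_succ_of_le k j hj₁ (by omega)) _ (by omega) (by omega),
    Nat.add_sub_cancel_left]
  exact fibWord_fn_succ_add (k + 1) _ (Nat.mod_lt _ (fn_pos _))

theorem fibWord_fn_sub_two (k : ℕ) : fibWord (fn (k + 2) - 2) = penult k := by
  have h := fibWord_length_add (A := centralW k) (B := [penult k, !penult k]) (N := k + 2)
    (r := 0) ⟨[], (List.append_nil _).trans (Fw_append_Fw_swap k).1.symm⟩ (by simp)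
  rwa [Nat.add_zero, ← Nat.add_sub_cancel (centralW k).length 2, length_centralW] at h

theorem fibWord_fn_sub_one (k : ℕ) : fibWord (fn (k + 2) - 1) = !penult k := by
  have h := fibWord_length_add (A := centralW k) (B := [penult k, !penult k]) (N := k + 2)
    (r := 1) ⟨[], (List.append_nil _).trans (Fw_append_Fw_swap k).1.symm⟩ (by simp)
  rwa [show (centralW k).length + 1 = fn (k + 2) - 1 by have := length_centralW k; omega] at h

theorem fibWord_add_fn_succ_ne (k : ℕ) :
    fibWord (fn (k + 2) - 2 + fn (k + 1)) ≠ fibWord (fn (k + 2) - 2) ∧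
      fibWord (fn (k + 2) - 1 + fn (k + 1)) ≠ fibWord (fn (k + 2) - 1) := by
  have f₃ : fn (k + 3) = fn (k + 2) + fn (k + 1) := fn_add_two (k + 1)
  have := le_fn (k + 2)
  rw [show fn (k + 2) - 2 + fn (k + 1) = fn (k + 3) - 2 by omega,
    show fn (k + 2) - 1 + fn (k + 1) = fn (k + 3) - 1 by omega, fibWord_fn_sub_two,
    fibWord_fn_sub_one, fibWord_fn_sub_two, fibWord_fn_sub_one, penult_succ]
  simp

theorem lt_or_add_le_of_square_window {p i q : ℕ}
    (hsq : ∀ t < p, fibWord (i + t + p) = fibWord (i + t))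
    (hq : fibWord (q + p) ≠ fibWord q) : q < i ∨ i + p ≤ q := by
  by_contra! h
  have := hsq (q - i) (by omega)
  rw [Nat.add_sub_cancel' h.1] at this
  exact hq this

theorem square_window_cases {k i : ℕ}
    (hsq : ∀ t < fn (k + 1), fibWord (i + t + fn (k + 1)) = fibWord (i + t)) :
    i + fn (k + 1) + 2 ≤ fn (k + 2) ∨ fn (k + 2) ≤ i := by
  have h₁ := lt_or_add_le_of_square_window hsq (fibWord_add_fn_succ_ne k).1
  have h₂ := lt_or_add_le_of_square_window hsq (fibWord_add_fn_succ_ne k).2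
  have := fn_pos (k + 1)
  have := le_fn (k + 2)
  omega

theorem fibWord_sub_fn_succ_add {j n i t : ℕ} (hn : n + 2 ≤ fn (j + 1))
    (h₁ : fn (j + 1) ≤ i) (h₂ : i < fn (j + 2)) (ht : t < n) :
    fibWord (i - fn (j + 1) + t) = fibWord (i + t) := by
  have f₂ : fn (j + 2) = fn (j + 1) + fn j := fn_add_two j
  have f₃ : fn (j + 3) = fn (j + 2) + fn (j + 1) := fn_add_two (j + 1)
  have f₄ : fn (j + 4) = fn (j + 3) + fn (j + 2) := fn_add_two (j + 2)
  calc fibWord (i - fn (j + 1) + t)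
      = fibWord (i - fn (j + 1) + t + fn (j + 3)) :=
        (fibWord_add_fn_succ (j + 2) _ (show _ < fn (j + 4) by omega)).symm
    _ = fibWord (i + t + fn (j + 2)) := by congr 1; omega
    _ = fibWord (i + t) := fibWord_add_fn_succ (j + 1) _ (show _ < fn (j + 3) by omega)

theorem exists_window_eq_of_lt_fn {k n : ℕ} (hn : n + 2 ≤ fn (k + 1)) (i : ℕ) :
    ∃ i' < fn (k + 1), ∀ t < n, fibWord (i' + t) = fibWord (i + t) := by
  suffices ∀ j, k ≤ j → ∀ i < fn (j + 1),
      ∃ i' < fn (k + 1), ∀ t < n, fibWord (i' + t) = fibWord (i + t) from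
    this (i + k) (by omega) i (by have := le_fn (i + k + 1); omega)
  intro j hj
  induction j, hj using Nat.le_induction with
  | base => exact fun i hi => ⟨i, hi, fun _ _ => rfl⟩
  | succ j _ ih =>
    intro i (hi : i < fn (j + 2))
    rcases lt_or_ge i (fn (j + 1)) with h | h
    · exact ih i h
    · have hnj : n + 2 ≤ fn (j + 1) := hn.trans (fn_mono (by omega))
      have f₂ : fn (j + 2) = fn (j + 1) + fn j := fn_add_two j
      have : fn j ≤ fn (j + 1) := fn_mono (by omega)
      obtain ⟨i', hi', hw⟩ := ih (i - fn (j + 1)) (by omega)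
      exact ⟨i', hi', fun t ht => (hw t ht).trans (fibWord_sub_fn_succ_add hnj h hi ht)⟩

theorem isFactorF_iff_getD {u : List Bool} :
    IsFactorF u ↔ ∃ i, ∀ t < u.length, u.getD t false = fibWord (i + t) := by
  have hget : ∀ i t, t < u.length →
      (fFactor i u.length).getD t false = fibWord (i - 1 + t) := by
    intro i t ht
    rw [List.getD_eq_getElem _ _ (by simpa [fFactor] using ht)]
    simp [fFactor]
  constructor
  · rintro ⟨i, -, hi⟩
    exact ⟨i - 1, fun t ht => by rw [← hget i t ht, ← hi]⟩
  · rintro ⟨i, hi⟩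
    refine ⟨i + 1, by omega, List.ext_getElem (by simp [fFactor]) fun t h₁ h₂ => ?_⟩
    rw [← List.getD_eq_getElem _ false h₁, ← List.getD_eq_getElem _ false h₂, hi t h₁,
      hget _ t h₁, Nat.add_sub_cancel]

theorem exists_square_window_of_isFactorF {k : ℕ} {w : List Bool}
    (hn : 2 * w.length + 2 ≤ fn (k + 1)) (h : IsFactorF (w ++ w)) :
    ∃ i < fn (k + 1), ∀ t < w.length,
      w.getD t false = fibWord (i + t) ∧ fibWord (i + t + w.length) = fibWord (i + t) := by
  obtain ⟨j, hj⟩ := isFactorF_iff_getD.1 h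
  rw [List.length_append] at hj
  obtain ⟨i, hi, hwin⟩ := exists_window_eq_of_lt_fn hn j
  refine ⟨i, hi, fun t ht => ⟨?_, ?_⟩⟩
  · rw [hwin t (by omega), ← hj t (by omega), List.getD_append _ _ _ _ ht]
  · rw [Nat.add_assoc, hwin _ (by omega), hwin t (by omega), ← hj _ (by omega),
      ← hj t (by omega), List.getD_append_right _ _ _ _ (by omega), Nat.add_sub_cancel,
      List.getD_append _ _ _ _ ht]

theorem List.getD_rotate {α : Type*} (u : List α) (d t : ℕ) (ht : t < u.length) (x : α) :
    (u.rotate d).getD t x = u.getD ((d + t) % u.length) x := by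
  rw [List.getD_eq_getElem _ _ (by rwa [List.length_rotate]),
    List.getD_eq_getElem _ _ (Nat.mod_lt _ (by omega)), List.getElem_rotate, Nat.add_comm t]

theorem List.eq_rotate_of_getD {α : Type*} {u w : List α} {d : ℕ} (x : α)
    (hw : w.length = u.length) (H : ∀ t < u.length, w.getD t x = u.getD ((d + t) % u.length) x) :
    w = u.rotate d := by
  apply List.ext_getElem (by rw [hw, List.length_rotate])
  intro t h₁ h₂
  have ht : t < u.length := hw ▸ h₁
  rw [← List.getD_eq_getElem _ x h₁, ← List.getD_eq_getElem _ x h₂, H t ht,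
    List.getD_rotate u d t ht]

theorem isFactorF_rotate_Fw_sq (k d : ℕ) :
    IsFactorF ((Fw (k + 1)).rotate d ++ (Fw (k + 1)).rotate d) := by
  set p := fn (k + 1)
  have hw : ((Fw (k + 1)).rotate d).length = p := by rw [List.length_rotate, length_Fw]
  have hd : d % p < p := Nat.mod_lt d (fn_pos _)
  have f₃ : fn (k + 3) = fn (k + 2) + p := fn_add_two (k + 1)
  have : p < fn (k + 2) := fn_strictMono (Nat.lt_succ_self _)
  refine isFactorF_iff_getD.2 ⟨fn (k + 2) + d % p, fun t ht => ?_⟩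
  rw [List.length_append, hw] at ht
  rw [Nat.add_assoc, fibWord_fn_succ_add_eq_getD_mod k _ (by omega), Nat.mod_add_mod]
  rcases lt_or_ge t p with h | h
  · rw [List.getD_append _ _ _ _ (by omega), List.getD_rotate _ _ _ (by rwa [length_Fw]),
      length_Fw]
  · rw [List.getD_append_right _ _ _ _ (by omega), hw,
      List.getD_rotate _ _ _ (by rw [length_Fw]; omega), length_Fw,
      ← Nat.add_sub_assoc h, ← Nat.mod_eq_sub_mod (by omega)]

theorem exists_rotate_of_isFactorF_sq {k : ℕ} {w : List Bool} (hw : w.length = fn (k + 2))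
    (h : IsFactorF (w ++ w)) : ∃ d < fn (k + 2), w = (Fw (k + 2)).rotate d := by
  have f₃ : fn (k + 3) = fn (k + 2) + fn (k + 1) := fn_add_two (k + 1)
  have f₄ : fn (k + 4) = fn (k + 3) + fn (k + 2) := fn_add_two (k + 2)
  have := le_fn (k + 1)
  obtain ⟨i, hi, hwin⟩ := exists_square_window_of_isFactorF (k := k + 3)
    (show _ ≤ fn (k + 4) by rw [hw]; omega) h
  rw [hw] at hwin
  suffices ∃ d, ∀ t < fn (k + 2),
      w.getD t false = (Fw (k + 2)).getD ((d + t) % fn (k + 2)) false by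
    obtain ⟨d, hd⟩ := this
    refine ⟨d % fn (k + 2), Nat.mod_lt _ (fn_pos _), ?_⟩
    rw [← length_Fw, List.rotate_mod]
    exact List.eq_rotate_of_getD false (by rw [hw, length_Fw]) (by rwa [length_Fw])
  have hi' : i < fn (k + 4) := hi
  have hrun : i + fn (k + 2) + 2 ≤ fn (k + 3) ∨ fn (k + 3) ≤ i :=
    square_window_cases fun t ht => (hwin t ht).2
  rcases hrun with hrun | hrun
  · refine ⟨i, fun t ht => ?_⟩
    rw [(hwin t ht).1, fibWord_eq_getD_mod (k + 1) _ (show _ < fn (k + 3) by omega)]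
  · refine ⟨i - fn (k + 3), fun t ht => ?_⟩
    rw [(hwin t ht).1, show i + t = fn (k + 3) + (i - fn (k + 3) + t) by omega,
      fibWord_fn_succ_add_eq_getD_mod (k + 1) _ (show _ < fn (k + 4) + fn (k + 2) by omega)]

theorem isFactorF_sq_iff {k : ℕ} {w : List Bool} (hw : w.length = fn (k + 2)) :
    IsFactorF (w ++ w) ↔ ∃ d < fn (k + 2), w = (Fw (k + 2)).rotate d :=
  ⟨exists_rotate_of_isFactorF_sq hw,
    fun ⟨d, _, hd⟩ => hd ▸ isFactorF_rotate_Fw_sq (k + 1) d⟩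

theorem List.dropLast_append_getLast! {α : Type*} [Inhabited α] {l : List α} (h : l ≠ []) :
    l.dropLast ++ [l.getLast!] = l := by
  rw [List.getLast!_eq_getLast?_getD, List.getLast?_eq_some_getLast h, Option.getD_some]
  exact List.dropLast_append_getLast h

theorem getLast!_Fw_add_two (m : ℕ) : (Fw (m + 2)).getLast! = (Fw m).getLast! := by
  simp [Fw_add_two, List.getLast?_append_of_ne_nil _ (Fw_ne_nil m)]

theorem length_kerW (m : ℕ) : (kerW m).length = fn m := by
  have := fn_pos m
  rw [kerW, List.length_cons, List.length_dropLast, length_Fw]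
  omega

theorem kerW_succ_append_kerW (m : ℕ) :
    kerW (m + 1) ++ kerW m = (Fw (m + 2)).getLast! :: (Fw (m + 2)).dropLast := by
  rw [kerW, kerW, List.cons_append, ← List.singleton_append (l := (Fw m).dropLast),
    ← List.append_assoc, List.dropLast_append_getLast! (Fw_ne_nil _), Fw_add_two,
    List.dropLast_append_of_ne_nil (Fw_ne_nil m)]

theorem kerW_add_three (m : ℕ) : kerW (m + 3) = kerW (m + 1) ++ kerW m ++ kerW (m + 1) := by
  have hK : kerW (m + 1) = (Fw (m + 2)).getLast! :: (Fw (m + 1)).dropLast := rfl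
  rw [kerW_succ_append_kerW, hK, kerW, getLast!_Fw_add_two (m + 2), List.cons_append,
    ← List.singleton_append (l := (Fw (m + 1)).dropLast), ← List.append_assoc,
    List.dropLast_append_getLast! (Fw_ne_nil _), Fw_add_two (m + 1),
    List.dropLast_append_of_ne_nil (Fw_ne_nil _)]

theorem exists_kerW_add_two (m : ℕ) :
    ∃ v, kerW (m + 2) = kerW m ++ v ++ kerW m ∧ (kerW m ++ v).length = fn (m + 1) := by
  cases m with
  | zero => exact ⟨[false], rfl, rfl⟩
  | succ m =>
    refine ⟨kerW m, kerW_add_three m, ?_⟩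
    rw [List.length_append, length_kerW, length_kerW, fn_add_two]

theorem rotate_Fw_fn_sub_one (m : ℕ) :
    (Fw (m + 2)).rotate (fn (m + 2) - 1) = kerW (m + 1) ++ kerW m := by
  conv_lhs => rw [← List.dropLast_append_getLast! (Fw_ne_nil (m + 2))]
  rw [← length_Fw, ← List.length_dropLast, List.rotate_append_length_eq, kerW_succ_append_kerW]
  rfl

theorem rotate_kerW_succ_append_kerW (m d : ℕ) :
    (kerW (m + 1) ++ kerW m).rotate (d + 1) = (Fw (m + 2)).rotate d := by
  have := fn_pos (m + 2)
  rw [← rotate_Fw_fn_sub_one, List.rotate_rotate, ← List.rotate_mod, length_Fw,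
    show fn (m + 2) - 1 + (d + 1) = d + fn (m + 2) by omega, Nat.add_mod_right,
    ← length_Fw, List.rotate_mod]

theorem List.drop_append_append_take {α : Type*} {u v : List α} {j : ℕ} (hj : j ≤ u.length) :
    u.drop j ++ v ++ u.take j = (u ++ v).rotate j := by
  rw [List.rotate_eq_drop_append_take (by rw [List.length_append]; omega),
    List.drop_append_of_le_length hj, List.take_append_of_le_length hj, List.append_assoc]

theorem sliceF_of_length_eq {u : List Bool} {L : ℕ} (hu : u.length = L) (i : ℕ) :
    sliceF u i L = u.drop (i - 1) :=
  List.take_of_length_le (by rw [List.length_drop]; omega)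

theorem sliceF_one (u : List Bool) (j : ℕ) : sliceF u 1 j = u.take j := by
  simp [sliceF]

theorem kernel_form_succ_eq_rotate (m i : ℕ) (hi : i ≤ fn (m + 1) + 1) :
    sliceF (kerW (m + 1)) i (fn (m + 1)) ++ kerW m ++ sliceF (kerW (m + 1)) 1 (i - 1) =
      (kerW (m + 1) ++ kerW m).rotate (i - 1) := by
  rw [sliceF_of_length_eq (length_kerW _), sliceF_one,
    List.drop_append_append_take (by rw [length_kerW]; omega)]

theorem kernel_form_add_two_eq_rotate (m i : ℕ) (h₁ : fn (m + 1) + 1 ≤ i)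
    (h₂ : i ≤ fn (m + 2) + 1) :
    sliceF (kerW (m + 2)) i (fn (m + 2)) ++ kerW (m + 1) ++
        sliceF (kerW (m + 2)) 1 (i - fn (m + 1) - 1) =
      (kerW (m + 1) ++ kerW m).rotate (i - 1) := by
  obtain ⟨v, hK, hv⟩ := exists_kerW_add_two m
  have f₂ : fn (m + 2) = fn (m + 1) + fn m := fn_add_two m
  have hj : i - fn (m + 1) - 1 ≤ (kerW m).length := by rw [length_kerW]; omega
  rw [sliceF_of_length_eq (length_kerW _), sliceF_one, hK,
    show i - 1 = (kerW m ++ v).length + (i - fn (m + 1) - 1) by omega,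
    List.drop_length_add_append, List.append_assoc (kerW m) v, List.take_append_of_le_length hj,
    List.drop_append_append_take hj, ← length_kerW (m + 1), ← List.rotate_append_length_eq,
    List.rotate_rotate, length_kerW, hv]

theorem kernel_forms_iff_rotate (m : ℕ) (w : List Bool) :
    ((∃ i, 2 ≤ i ∧ i ≤ fn (m + 1) ∧
        w = sliceF (kerW (m + 1)) i (fn (m + 1)) ++ kerW m ++ sliceF (kerW (m + 1)) 1 (i - 1)) ∨
      (∃ i, fn (m + 1) + 1 ≤ i ∧ i ≤ fn (m + 2) + 1 ∧
        w = sliceF (kerW (m + 2)) i (fn (m + 2)) ++ kerW (m + 1) ++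
          sliceF (kerW (m + 2)) 1 (i - fn (m + 1) - 1))) ↔
      ∃ d < fn (m + 2), w = (Fw (m + 2)).rotate d := by
  have f₂ : fn (m + 2) = fn (m + 1) + fn m := fn_add_two m
  have := le_fn (m + 1)
  have hrot : ∀ d, (kerW (m + 1) ++ kerW m).rotate (d + 2 - 1) = (Fw (m + 2)).rotate d :=
    fun d => rotate_kerW_succ_append_kerW m d
  constructor
  · rintro (⟨i, hi₁, hi₂, rfl⟩ | ⟨i, hi₁, hi₂, rfl⟩)
    · refine ⟨i - 2, by omega, ?_⟩
      rw [kernel_form_succ_eq_rotate m i (by omega), ← hrot, Nat.sub_add_cancel hi₁]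
    · refine ⟨i - 2, by omega, ?_⟩
      rw [kernel_form_add_two_eq_rotate m i hi₁ hi₂, ← hrot, Nat.sub_add_cancel (by omega)]
  · rintro ⟨d, hd, rfl⟩
    rcases le_or_gt (d + 2) (fn (m + 1)) with h | h
    · exact Or.inl ⟨d + 2, by omega, h, by
        rw [kernel_form_succ_eq_rotate m _ (by omega), hrot]⟩
    · exact Or.inr ⟨d + 2, by omega, by omega, by
        rw [kernel_form_add_two_eq_rotate m _ (by omega) (by omega), hrot]⟩

theorem List.count_mul_length_eq_of_append_comm {α : Type*} [BEq α] (a : α) {x y : List α}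
    (h : x ++ y = y ++ x) : x.count a * y.length = y.count a * x.length := by
  induction hn : x.length + y.length using Nat.strong_induction_on generalizing x y with
  | _ n ih =>
    wlog hxy : x.length ≤ y.length generalizing x y
    · exact (this h.symm (by omega) (by omega)).symm
    rcases eq_or_ne x [] with rfl | hx
    · simp
    obtain ⟨z, rfl⟩ : x <+: y :=
      List.prefix_of_prefix_length_le (List.prefix_append x y) (h ▸ List.prefix_append y x) hxy
    have hz : x ++ z = z ++ x :=
      List.append_cancel_left (as := x) (by rw [h, List.append_assoc])
    have hlt : x.length + z.length < n := by
      have := List.length_pos_iff.2 hx; rw [← hn, List.length_append]; omega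
    have := ih _ hlt hz rfl
    simp only [List.count_append, List.length_append]
    rw [Nat.mul_add, this, Nat.add_mul, Nat.add_comm]

theorem List.count_take_mul_length_of_rotate_eq_self {α : Type*} [BEq α] (a : α) {l : List α}
    {e : ℕ} (he : e ≤ l.length) (h : l.rotate e = l) :
    (l.take e).count a * l.length = l.count a * e := by
  have hcomm : l.take e ++ l.drop e = l.drop e ++ l.take e := by
    rw [List.take_append_drop, ← List.rotate_eq_drop_append_take he, h]
  have key := List.count_mul_length_eq_of_append_comm a hcomm
  rw [List.length_take_of_le he, List.length_drop] at key
  conv_rhs => rw [← List.take_append_drop e l]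
  rw [List.count_append, Nat.add_mul, ← key, ← Nat.mul_add, Nat.add_sub_cancel' he]

theorem count_true_Fw : ∀ m, (Fw m).count true = Nat.fib m
  | 0 => rfl
  | 1 => rfl
  | m + 2 => by
      rw [Fw_add_two, List.count_append, count_true_Fw (m + 1), count_true_Fw m,
        Nat.fib_add_two, Nat.add_comm]

theorem coprime_fn_fib (m : ℕ) : Nat.Coprime (fn m) (Nat.fib m) := by
  rw [fn, Nat.fib_add_two, Nat.Coprime, Nat.add_comm, Nat.gcd_add_self_left]
  exact (Nat.fib_coprime_fib_succ m).symm

theorem rotate_Fw_ne_self {m e : ℕ} (h₀ : 0 < e) (he : e < fn m) :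
    (Fw m).rotate e ≠ Fw m := by
  intro h
  have hcount := List.count_take_mul_length_of_rotate_eq_self true (by rw [length_Fw]; omega) h
  rw [length_Fw, count_true_Fw] at hcount
  have hdvd : fn m ∣ e :=
    (coprime_fn_fib m).dvd_of_dvd_mul_left ⟨_, hcount.symm.trans (Nat.mul_comm _ _)⟩
  exact absurd (Nat.le_of_dvd h₀ hdvd) (by omega)

theorem rotate_Fw_injOn (m : ℕ) : Set.InjOn (Fw m).rotate (Set.Iio (fn m)) := by
  intro a ha b hb hab
  wlog hlt : a < b generalizing a b
  · rcases lt_or_eq_of_le (not_lt.1 hlt) with h | h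
    · exact (this hb ha hab.symm h).symm
    · exact h.symm
  have hb' : b < fn m := hb
  refine absurd ?_ (rotate_Fw_ne_self (m := m) (e := a + (fn m - b)) (by omega) (by omega))
  rw [← List.rotate_rotate, hab, List.rotate_rotate, Nat.add_sub_cancel' hb'.le, ← length_Fw,
    List.rotate_length]

/-- Characterization of the squares of length `2f_m` (`m ≥ 2`) in the Fibonacci word,
and: there are exactly `f_m` distinct squares of length `2f_m` occurring in `F`. -/
theorem squares_of_length_two_fib (m : ℕ) (hm : 2 ≤ m) :
    (∀ w : List Bool, w.length = fn m →
      (IsFactorF (w ++ w) ↔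
        (∃ i, 2 ≤ i ∧ i ≤ fn (m - 1) ∧
          w = sliceF (kerW (m - 1)) i (fn (m - 1)) ++ kerW (m - 2) ++
            sliceF (kerW (m - 1)) 1 (i - 1)) ∨
        (∃ i, fn (m - 1) + 1 ≤ i ∧ i ≤ fn m + 1 ∧
          w = sliceF (kerW m) i (fn m) ++ kerW (m - 1) ++
            sliceF (kerW m) 1 (i - fn (m - 1) - 1)))) ∧
    {w : List Bool | w.length = fn m ∧ IsFactorF (w ++ w)}.ncard = fn m := by
  obtain ⟨k, rfl⟩ : ∃ k, m = k + 2 := ⟨m - 2, by omega⟩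
  rw [show k + 2 - 1 = k + 1 by omega, Nat.add_sub_cancel]
  refine ⟨fun w hw => (isFactorF_sq_iff hw).trans (kernel_forms_iff_rotate k w).symm, ?_⟩
  have hsquares : {w : List Bool | w.length = fn (k + 2) ∧ IsFactorF (w ++ w)} =
      (Fw (k + 2)).rotate '' Set.Iio (fn (k + 2)) := by
    ext w
    constructor
    · rintro ⟨hw, h⟩
      obtain ⟨d, hd, rfl⟩ := (isFactorF_sq_iff hw).1 h
      exact ⟨d, hd, rfl⟩
    · rintro ⟨d, hd, rfl⟩
      have hw : ((Fw (k + 2)).rotate d).length = fn (k + 2) := by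
        rw [List.length_rotate, length_Fw]
      exact ⟨hw, (isFactorF_sq_iff hw).2 ⟨d, hd, rfl⟩⟩
  rw [hsquares, (rotate_Fw_injOn _).ncard_image, Set.ncard_Iio_nat]
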